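/- Let p ≥ 2 be an integer and let H be a graph. If H is a contraction of K_{2,p} and H is not isomorphic to K_{2,p}, then H is isomorphic to D_r for some integer r ≥ 0 or to a star K_{1,r} for some integer r ≥ 0. -/

import Mathlib

/-!
In a contraction model of `K_{α,β}`, a branch set avoiding the left side is connected and
independent, hence a single right vertex; these vertices of `H` are pairwise non-adjacent and
adjacent to all others. For `α = Fin 2` at most two branch sets meet the left side. If they
coincide or are adjacent, `H` is a complete split graph with one or two dominating vertices: a star
or `D_r`. Otherwise neither contains a right vertex (it would be adjacent to the other), so every
branch set is a singleton and `H ≅ K_{2,p}`.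
-/

open SimpleGraph

/-- A contraction model of a graph `H` in a graph `G`: a map sending each vertex of `H`
to a connected subset of vertices of `G`, these subsets partitioning the vertices of `G`,
with distinct vertices of `H` adjacent iff the corresponding subsets are joined by an
edge of `G`. -/
def IsContractionModel {V W : Type*} (G : SimpleGraph V) (H : SimpleGraph W)
    (φ : W → Set V) : Prop :=
  (∀ w : W, (G.induce (φ w)).Connected) ∧
  (∀ v : V, ∃! w : W, v ∈ φ w) ∧
  ∀ w w' : W, w ≠ w' →
    (H.Adj w w' ↔ ∃ a ∈ φ w, ∃ b ∈ φ w', G.Adj a b)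

/-- `H` is a contraction of `G`: there is a contraction model of `H` in `G`
(equivalently, `H` can be obtained from `G` by a sequence of edge contractions). -/
def IsContraction {V W : Type*} (H : SimpleGraph W) (G : SimpleGraph V) : Prop :=
  ∃ φ : W → Set V, IsContractionModel G H φ

/-- The graph `D_r`: two adjacent vertices together with `r` further vertices,
each adjacent to exactly the first two. `D_2` is the diamond (`K₄` minus an edge). -/
def Dgraph (r : ℕ) : SimpleGraph (Fin 2 ⊕ Fin r) :=
  SimpleGraph.fromRel (fun x _ => x.isLeft)

/-- Finite graphs, with vertex set `Fin n` for some `n`. -/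
def FinGraph : Type := Σ n : ℕ, SimpleGraph (Fin n)

/-- The contraction relation on finite graphs. -/
def FinGraph.Contr (H G : FinGraph) : Prop := IsContraction H.2 G.2

/-- A set of finite graphs is well-quasi-ordered by the contraction relation if every
infinite sequence of its members contains two graphs, the earlier being a contraction
of the later. -/
def WqoByContraction (S : Set FinGraph) : Prop :=
  ∀ f : ℕ → FinGraph, (∀ k, f k ∈ S) → ∃ i j : ℕ, i < j ∧ FinGraph.Contr (f i) (f j)

lemma SimpleGraph.Connected.subsingleton_of_forall_not_adj {V : Type*} {G : SimpleGraph V}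
    {s : Set V} (h : (G.induce s).Connected) (hs : ∀ a ∈ s, ∀ b ∈ s, ¬ G.Adj a b) :
    s.Subsingleton := by
  intro a ha b hb
  have hbot : G.induce s = ⊥ := by
    ext x y
    simpa using hs x x.2 y y.2
  have hr := h.preconnected ⟨a, ha⟩ ⟨b, hb⟩
  rw [hbot, reachable_bot] at hr
  exact congrArg Subtype.val hr

namespace IsContractionModel

variable {V W : Type*} {G : SimpleGraph V} {H : SimpleGraph W} {φ : W → Set V}

lemma exists_mem (hφ : IsContractionModel G H φ) (v : V) : ∃ w, v ∈ φ w :=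
  (hφ.2.1 v).exists

lemma eq_of_mem (hφ : IsContractionModel G H φ) {v : V} {w w' : W} (hw : v ∈ φ w)
    (hw' : v ∈ φ w') : w = w' :=
  (hφ.2.1 v).unique hw hw'

lemma adj_iff (hφ : IsContractionModel G H φ) {w w' : W} (hne : w ≠ w') :
    H.Adj w w' ↔ ∃ a ∈ φ w, ∃ b ∈ φ w', G.Adj a b :=
  hφ.2.2 w w' hne

lemma exists_eq_singleton_of_forall_not_adj (hφ : IsContractionModel G H φ) (w : W)
    (hw : ∀ a ∈ φ w, ∀ b ∈ φ w, ¬ G.Adj a b) : ∃ v, φ w = {v} := by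
  obtain ⟨v, hv⟩ := Set.nonempty_coe_sort.mp (hφ.1 w).nonempty
  exact ⟨v, ((hφ.1 w).subsingleton_of_forall_not_adj hw).eq_singleton_of_mem hv⟩

lemma nonempty_iso_of_forall_singleton (hφ : IsContractionModel G H φ)
    (h : ∀ w, ∃ v, φ w = {v}) : Nonempty (H ≃g G) := by
  choose f hf using h
  have hmem : ∀ w, f w ∈ φ w := fun w => by simp [hf w]
  have hbij : Function.Bijective f := by
    refine ⟨fun w w' hww' => hφ.eq_of_mem (hmem w) (hww' ▸ hmem w'), fun v => ?_⟩
    obtain ⟨w, hw⟩ := hφ.exists_mem v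
    exact ⟨w, by simpa [hf w, eq_comm] using hw⟩
  refine ⟨⟨Equiv.ofBijective f hbij, fun {w w'} => ?_⟩⟩
  rcases eq_or_ne w w' with rfl | hne
  · simp
  · simp [hφ.adj_iff hne, hf]

section completeBipartiteGraph

variable {α β : Type*} {φ : W → Set (α ⊕ β)}

lemma exists_eq_singleton_inr (hφ : IsContractionModel (completeBipartiteGraph α β) H φ)
    {w : W} (hw : ∀ a, Sum.inl a ∉ φ w) : ∃ b, φ w = {Sum.inr b} := by
  have hright : ∀ x ∈ φ w, ∃ b, x = Sum.inr b := by
    rintro (a | b) hx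
    exacts [absurd hx (hw a), ⟨b, rfl⟩]
  obtain ⟨x, hx⟩ := hφ.exists_eq_singleton_of_forall_not_adj w fun x hx y hy => by
    obtain ⟨b, rfl⟩ := hright x hx
    obtain ⟨b', rfl⟩ := hright y hy
    simp
  obtain ⟨b, rfl⟩ := hright x (hx ▸ rfl)
  exact ⟨b, hx⟩

lemma eq_singleton_inl_of_not_adj (hφ : IsContractionModel (completeBipartiteGraph α β) H φ)
    {w w' : W} {i j : α} (hne : w ≠ w') (hi : Sum.inl i ∈ φ w) (hj : Sum.inl j ∈ φ w')
    (hadj : ¬ H.Adj w w') : φ w = {Sum.inl i} := by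
  have hleft : ∀ x ∈ φ w, ∃ a, x = Sum.inl a := by
    rintro (a | b) hx
    · exact ⟨a, rfl⟩
    · exact absurd ((hφ.adj_iff hne).2 ⟨_, hx, _, hj, by simp⟩) hadj
  refine ((hφ.1 w).subsingleton_of_forall_not_adj fun x hx y hy => ?_).eq_singleton_of_mem hi
  obtain ⟨a, rfl⟩ := hleft x hx
  obtain ⟨a', rfl⟩ := hleft y hy
  simp

lemma adj_iff_of_isClique (hφ : IsContractionModel (completeBipartiteGraph α β) H φ)
    {C : Set W} (hC : ∀ w, w ∈ C ↔ ∃ a, Sum.inl a ∈ φ w) (hclique : H.IsClique C) (x y : W) :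
    H.Adj x y ↔ x ≠ y ∧ (x ∈ C ∨ y ∈ C) := by
  have hsingleton : ∀ {w}, w ∉ C → ∃ b, φ w = {Sum.inr b} := fun hw =>
    hφ.exists_eq_singleton_inr fun a ha => hw ((hC _).2 ⟨a, ha⟩)
  have hadj_of_mem : ∀ {x y}, x ≠ y → x ∈ C → H.Adj x y := fun {x y} hne hx => by
    by_cases hy : y ∈ C
    · exact hclique hx hy hne
    obtain ⟨a, ha⟩ := (hC x).1 hx
    obtain ⟨b, hb⟩ := hsingleton hy
    exact (hφ.adj_iff hne).2 ⟨_, ha, Sum.inr b, hb ▸ rfl, by simp⟩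
  refine ⟨fun hA => ⟨hA.ne, ?_⟩, fun ⟨hne, hxy⟩ => ?_⟩
  · by_contra! hout
    obtain ⟨b, hb⟩ := hsingleton hout.1
    obtain ⟨b', hb'⟩ := hsingleton hout.2
    simpa [hb, hb'] using (hφ.adj_iff hA.ne).1 hA
  · exact hxy.elim (hadj_of_mem hne) fun hy => (hadj_of_mem hne.symm hy).symm

end completeBipartiteGraph

end IsContractionModel

def completeSplitGraph (α β : Type*) : SimpleGraph (α ⊕ β) :=
  SimpleGraph.fromRel fun x _ => x.isLeft

@[simp]
lemma completeSplitGraph_adj {α β : Type*} {x y : α ⊕ β} :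
    (completeSplitGraph α β).Adj x y ↔ x ≠ y ∧ (x.isLeft ∨ y.isLeft) := by
  simp [completeSplitGraph]

lemma completeBipartiteGraph_eq_completeSplitGraph (α β : Type*) [Subsingleton α] :
    completeBipartiteGraph α β = completeSplitGraph α β := by
  ext x y
  rcases x with _ | _ <;> rcases y with _ | _ <;> simp [eq_iff_true_of_subsingleton]

lemma Dgraph_eq_completeSplitGraph (r : ℕ) : Dgraph r = completeSplitGraph (Fin 2) (Fin r) := rfl

lemma exists_iso_completeSplitGraph {V : Type*} [Finite V] {H : SimpleGraph V} {C : Finset V}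
    {k : ℕ} (hk : C.card = k) (h : ∀ x y, H.Adj x y ↔ x ≠ y ∧ (x ∈ C ∨ y ∈ C)) :
    ∃ r, Nonempty (H ≃g completeSplitGraph (Fin k) (Fin r)) := by
  classical
  let e : V ≃ Fin k ⊕ Fin (Nat.card {x // x ∉ C}) :=
    (Equiv.sumCompl (· ∈ C)).symm.trans ((C.equivFinOfCardEq hk).sumCongr (Finite.equivFin _))
  have he : ∀ x, (e x).isLeft ↔ x ∈ C := fun x => by
    by_cases hx : x ∈ C
    · simp [e, Equiv.sumCompl_symm_apply_of_pos hx, hx]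
    · simp [e, Equiv.sumCompl_symm_apply_of_neg hx, hx]
  exact ⟨_, ⟨e, by simp [he, h]⟩⟩

theorem contraction_of_completeBipartite_two_general {V : Type*} [Fintype V]
    (p : ℕ) (H : SimpleGraph V)
    (hctr : IsContraction H (completeBipartiteGraph (Fin 2) (Fin p)))
    (hniso : ¬ Nonempty (H ≃g completeBipartiteGraph (Fin 2) (Fin p))) :
    (∃ r : ℕ, Nonempty (H ≃g Dgraph r)) ∨
    (∃ r : ℕ, Nonempty (H ≃g completeBipartiteGraph (Fin 1) (Fin r))) := by
  classical
  obtain ⟨φ, hφ⟩ := hctr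
  obtain ⟨w₁, h₁⟩ := hφ.exists_mem (Sum.inl 0)
  obtain ⟨w₂, h₂⟩ := hφ.exists_mem (Sum.inl 1)
  have hC : ∀ w, w ∈ (({w₁, w₂} : Finset V) : Set V) ↔ ∃ a, Sum.inl a ∈ φ w := fun w => by
    simp only [Finset.coe_pair, Set.mem_insert_iff, Set.mem_singleton_iff, Fin.exists_fin_two]
    exact ⟨by rintro (rfl | rfl) <;> simp [h₁, h₂],
      Or.imp (hφ.eq_of_mem · h₁) (hφ.eq_of_mem · h₂)⟩
  by_cases hadj : w₁ ≠ w₂ → H.Adj w₁ w₂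
  · have hsplit := hφ.adj_iff_of_isClique hC (by rw [Finset.coe_pair]; exact isClique_pair.2 hadj)
    by_cases h12 : w₁ = w₂
    · right
      subst h12
      simp_rw [completeBipartiteGraph_eq_completeSplitGraph]
      exact exists_iso_completeSplitGraph (by simp) hsplit
    · left
      simp_rw [Dgraph_eq_completeSplitGraph]
      exact exists_iso_completeSplitGraph (Finset.card_pair h12) hsplit
  · push Not at hadj
    refine absurd (hφ.nonempty_iso_of_forall_singleton fun w => ?_) hniso
    by_cases hw : w = w₁ ∨ w = w₂
    · rcases hw with rfl | rfl
      · exact ⟨_, hφ.eq_singleton_inl_of_not_adj hadj.1 h₁ h₂ hadj.2⟩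
      · exact ⟨_, hφ.eq_singleton_inl_of_not_adj hadj.1.symm h₂ h₁ fun h => hadj.2 h.symm⟩
    · obtain ⟨b, hb⟩ := hφ.exists_eq_singleton_inr fun a ha =>
        hw (by simpa using (hC w).2 ⟨a, ha⟩)
      exact ⟨_, hb⟩

/-- Let `p ≥ 2` and let `H` be a graph. If `H` is a contraction of
`K_{2,p}` and `H` is not isomorphic to `K_{2,p}`, then `H` is isomorphic to `D_r` for
some `r ≥ 0` or to a star `K_{1,r}` for some `r ≥ 0`. -/
theorem contraction_of_completeBipartite_two {V : Type*} [Fintype V]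
    (p : ℕ) (hp : 2 ≤ p) (H : SimpleGraph V)
    (hctr : IsContraction H (completeBipartiteGraph (Fin 2) (Fin p)))
    (hniso : ¬ Nonempty (H ≃g completeBipartiteGraph (Fin 2) (Fin p))) :
    (∃ r : ℕ, Nonempty (H ≃g Dgraph r)) ∨
    (∃ r : ℕ, Nonempty (H ≃g completeBipartiteGraph (Fin 1) (Fin r))) :=
  contraction_of_completeBipartite_two_general p H hctr hniso
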